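/- arXiv:1811.07606 — 7 statements merged into one kernel-verified Lean document; each statement's English description precedes it below -/
import Mathlib

section
/- Let X be a normal topological space and f : X → ℝ a function such that f⁻¹(G) is an F_σ subset of X for every open set G ⊆ ℝ. Then f is a Baire one function, i.e., f is the pointwise limit of a sequence of continuous real-valued functions on X. -/
/-!
The overlapping bands `(jδ, jδ + 2δ)`, `j ∈ ℤ`, cover `ℝ`, so the `F_σ` sets `f⁻¹(band)` cover
`X`; exhaust each by increasing closed sets. Finitely many of these closed pieces, indexed by their
bands, are separated by Urysohn functions (the `k`-th is `0` on pieces of lower bands and `1` on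
pieces of higher ones), and `δ` times their sum is a continuous staircase within `2δ` of `f` on
the union of those pieces. Taking more and more pieces gives, for every `ε`, continuous functions
that are eventually `ε`-close to `f` at every point. Finally, the differences between consecutive
scales `ε = 2⁻ᵐ`, clamped to `[-2ε, 2ε]`, form a telescoping series whose tail is uniformly small,
and its partial sums converge to `f` pointwise.
-/

/-- A function between topological spaces is *Baire one* if it is the pointwise
limit of a sequence of continuous functions. -/
def IsBaireOne {X Y : Type*} [TopologicalSpace X] [TopologicalSpace Y] (f : X → Y) : Prop :=
  ∃ F : ℕ → X → Y, (∀ n, Continuous (F n)) ∧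
    ∀ x, Filter.Tendsto (fun n => F n x) Filter.atTop (nhds (f x))

/-- A set is *Fσ* if it is a countable union of closed sets. -/
def IsFSigma {X : Type*} [TopologicalSpace X] (S : Set X) : Prop :=
  ∃ F : ℕ → Set X, (∀ n, IsClosed (F n)) ∧ S = ⋃ n, F n

open Set Filter Topology

section

variable {X : Type*} [TopologicalSpace X]

lemma IsFSigma.exists_monotone_isClosed {S : Set X} (hS : IsFSigma S) :
    ∃ E : ℕ → Set X, (∀ n, IsClosed (E n)) ∧ Monotone E ∧ S = ⋃ n, E n := by
  obtain ⟨F, hF, rfl⟩ := hS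
  refine ⟨accumulate F, fun n => ?_, monotone_accumulate, iUnion_accumulate.symm⟩
  rw [accumulate_def]
  exact (finite_le_nat n).isClosed_biUnion fun k _ => hF k

lemma sum_Ico_half_pow_le (m n : ℕ) :
    ∑ k ∈ Finset.Ico m n, (1 / 2 : ℝ) ^ k ≤ 2 * (1 / 2) ^ m := by
  rw [Finset.sum_Ico_eq_sum_range]
  simp_rw [pow_add, ← Finset.mul_sum]
  rw [mul_comm]
  exact mul_le_mul_of_nonneg_right (sum_geometric_two_le _) (by positivity)

lemma abs_max_neg_min_le {c : ℝ} (hc : 0 ≤ c) (y : ℝ) : |max (-c) (min c y)| ≤ c :=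
  abs_le.2 ⟨le_max_left _ _, max_le (by linarith) (min_le_left _ _)⟩

lemma max_neg_min_eq_self {c y : ℝ} (h : |y| ≤ c) : max (-c) (min c y) = y := by
  rw [min_eq_right (abs_le.1 h).2, max_eq_right (abs_le.1 h).1]

theorem isBaireOne_of_forall_eventually_abs_sub_le {g : X → ℝ}
    (h : ∀ ε > 0, ∃ u : ℕ → X → ℝ, (∀ n, Continuous (u n)) ∧
      ∀ x, ∀ᶠ n in atTop, |u n x - g x| ≤ ε) :
    IsBaireOne g := by
  set δ : ℕ → ℝ := fun m => (1 / 2) ^ m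
  have hδ : ∀ m, 0 < δ m := fun m => by positivity
  choose u hu hclose using fun m => h (δ m) (hδ m)
  set v : ℕ → ℕ → X → ℝ := fun m n x =>
    max (-(2 * δ m)) (min (2 * δ m) (u (m + 1) n x - u m n x))
  refine ⟨fun n x => u 0 n x + ∑ m ∈ Finset.range n, v m n x, fun n => ?_, fun x => ?_⟩
  · exact (hu 0 n).add <| continuous_finsetSum _ fun m _ =>
      continuous_const.max (continuous_const.min ((hu (m + 1) n).sub (hu m n)))
  -- Once the first `M` scales are `δ`-close at `x`, the series telescopes up to `u M`,
  -- and the clamped tail is at most `4 δ M`.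
  have key : ∀ M, ∀ᶠ n in atTop,
      |u 0 n x + ∑ m ∈ Finset.range n, v m n x - g x| ≤ 5 * δ M := by
    intro M
    filter_upwards [eventually_ge_atTop M,
      (eventually_all_finset (Finset.range (M + 1))).2 fun m _ => hclose m x] with n hMn hn
    have hv : ∀ m < M, v m n x = u (m + 1) n x - u m n x := fun m hm => by
      refine max_neg_min_eq_self ?_
      have h₁ := hn (m + 1) (Finset.mem_range.2 (by omega))
      have h₂ := hn m (Finset.mem_range.2 (by omega))
      have hδsucc : δ (m + 1) = δ m / 2 := by simp only [δ, pow_succ]; ring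
      calc |u (m + 1) n x - u m n x| ≤ |u (m + 1) n x - g x| + |u m n x - g x| := by
            simpa only [abs_sub_comm (g x)] using abs_sub_le (u (m + 1) n x) (g x) (u m n x)
        _ ≤ 2 * δ m := by linarith [hδ m]
    have htail : |∑ m ∈ Finset.Ico M n, v m n x| ≤ 4 * δ M :=
      calc |∑ m ∈ Finset.Ico M n, v m n x| ≤ ∑ m ∈ Finset.Ico M n, 2 * δ m :=
            (Finset.abs_sum_le_sum_abs _ _).trans <| Finset.sum_le_sum fun m _ =>
              abs_max_neg_min_le (by linarith [hδ m]) _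
        _ ≤ 4 * δ M := by
            rw [← Finset.mul_sum]; linarith [sum_Ico_half_pow_le M n]
    have hsplit : u 0 n x + ∑ m ∈ Finset.range n, v m n x - g x =
        (u M n x - g x) + ∑ m ∈ Finset.Ico M n, v m n x := by
      rw [← Finset.sum_range_add_sum_Ico _ hMn,
        Finset.sum_congr rfl fun m hm => hv m (Finset.mem_range.1 hm),
        Finset.sum_range_sub (fun m => u m n x)]
      ring
    rw [hsplit]
    linarith [abs_add_le (u M n x - g x) (∑ m ∈ Finset.Ico M n, v m n x),
      hn M (by simp)]
  refine Metric.tendsto_nhds.2 fun ε hε => ?_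
  obtain ⟨M, hM⟩ := exists_pow_lt_of_lt_one (by positivity : 0 < ε / 5)
    (by norm_num : (1 / 2 : ℝ) < 1)
  filter_upwards [key M] with n hn
  rw [Real.dist_eq]
  linarith [show 5 * δ M < ε by simp only [δ]; linarith]

lemma exists_continuous_abs_sub_le_of_bands [NormalSpace X] {g : X → ℝ} {c δ : ℝ} (hδ : 0 ≤ δ)
    (N : ℕ) {F : ℕ → Set X} (hF : ∀ k, IsClosed (F k))
    (hg : ∀ k, ∀ x ∈ F k, g x ∈ Ioo (c + k * δ) (c + k * δ + 2 * δ)) :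
    ∃ u : X → ℝ, Continuous u ∧ ∀ k < N, ∀ x ∈ F k, |u x - g x| ≤ 2 * δ := by
  have hsep : ∀ k, Disjoint (⋃ j ∈ Finset.range k, F j) (⋃ j ∈ Finset.Ioo k N, F j) := by
    refine fun k => disjoint_left.2 fun x hlow hhigh => ?_
    simp only [mem_iUnion, Finset.mem_range, Finset.mem_Ioo] at hlow hhigh
    obtain ⟨i, hik, hxi⟩ := hlow
    obtain ⟨j, ⟨hkj, -⟩, hxj⟩ := hhigh
    have hij : (i : ℝ) + 2 ≤ j := by exact_mod_cast (by omega : i + 2 ≤ j)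
    linarith [(hg i x hxi).2, (hg j x hxj).1, mul_le_mul_of_nonneg_right hij hδ]
  choose φ hφ0 hφ1 hφ01 using fun k => exists_continuous_zero_one_of_isClosed
    ((Finset.range k).finite_toSet.isClosed_biUnion fun j _ => hF j)
    ((Finset.Ioo k N).finite_toSet.isClosed_biUnion fun j _ => hF j) (hsep k)
  refine ⟨fun x => c + δ + δ * ∑ k ∈ Finset.range N, φ k x,
    continuous_const.add <| continuous_const.mul <|
      continuous_finsetSum _ fun k _ => (φ k).continuous,
    fun j hjN x hx => ?_⟩
  have hone : ∀ k < j, φ k x = 1 := fun k hk =>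
    hφ1 k (mem_biUnion (Finset.mem_coe.2 (Finset.mem_Ioo.2 ⟨hk, hjN⟩)) hx)
  have hzero : ∀ k, j < k → φ k x = 0 := fun k hk =>
    hφ0 k (mem_biUnion (Finset.mem_coe.2 (Finset.mem_range.2 hk)) hx)
  have hlow : (j : ℝ) ≤ ∑ k ∈ Finset.range N, φ k x :=
    calc (j : ℝ) = ∑ k ∈ Finset.range j, φ k x := by
          rw [Finset.sum_congr rfl fun k hk => hone k (Finset.mem_range.1 hk)]; simp
      _ ≤ ∑ k ∈ Finset.range N, φ k x :=
          Finset.sum_le_sum_of_subset_of_nonneg (Finset.range_subset_range.2 hjN.le)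
            fun k _ _ => (hφ01 k x).1
  have hhigh : ∑ k ∈ Finset.range N, φ k x ≤ j + 1 :=
    calc ∑ k ∈ Finset.range N, φ k x = ∑ k ∈ Finset.range (j + 1), φ k x :=
          (Finset.sum_subset (Finset.range_subset_range.2 hjN) fun k _ hk =>
            hzero k (by simpa using hk)).symm
      _ ≤ ∑ k ∈ Finset.range (j + 1), (1 : ℝ) := Finset.sum_le_sum fun k _ => (hφ01 k x).2
      _ = j + 1 := by simp
  have hgx := hg j x hx
  rw [abs_le]
  constructor <;> nlinarith [hgx.1, hgx.2]

lemma exists_seq_continuous_eventually_abs_sub_le [NormalSpace X] {g : X → ℝ}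
    (hg : ∀ a b, IsFSigma (g ⁻¹' Ioo a b)) {ε : ℝ} (hε : 0 < ε) :
    ∃ u : ℕ → X → ℝ, (∀ n, Continuous (u n)) ∧ ∀ x, ∀ᶠ n in atTop, |u n x - g x| ≤ ε := by
  set δ := ε / 2
  choose E hEc hEmono hE using fun j : ℤ =>
    (hg (j * δ) (j * δ + 2 * δ)).exists_monotone_isClosed
  -- At stage `n` use the pieces `E j n` of the bands with `|j| ≤ n`, reindexed by `k = j + n`.
  have hband : ∀ (n k : ℕ), ∀ x ∈ E (k - n) n,
      g x ∈ Ioo (-(n * δ) + k * δ) (-(n * δ) + k * δ + 2 * δ) := fun n k x hx => by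
    have : x ∈ g ⁻¹' _ := (hE (k - n)).symm ▸ mem_iUnion_of_mem n hx
    simp only [mem_preimage, mem_Ioo, Int.cast_sub, Int.cast_natCast] at this
    constructor <;> linarith [this.1, this.2]
  choose u hu hclose using fun n =>
    exists_continuous_abs_sub_le_of_bands (by positivity) (2 * n + 1) (fun _ => hEc _ n) (hband n)
  refine ⟨u, hu, fun x => ?_⟩
  set j : ℤ := ⌊g x / δ⌋ - 1
  have hxj : x ∈ g ⁻¹' Ioo (j * δ) (j * δ + 2 * δ) := by
    have hδ : 0 < δ := by positivity
    have h₁ := Int.floor_le (g x / δ)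
    have h₂ := Int.lt_floor_add_one (g x / δ)
    rw [le_div_iff₀ hδ] at h₁
    rw [div_lt_iff₀ hδ] at h₂
    simp only [j, mem_preimage, mem_Ioo, Int.cast_sub, Int.cast_one]
    constructor <;> linarith
  rw [hE j, mem_iUnion] at hxj
  obtain ⟨m, hm⟩ := hxj
  filter_upwards [eventually_ge_atTop (max m j.natAbs)] with n hn
  have hk : ((j + n).toNat : ℤ) - n = j := by omega
  refine (hclose n (j + n).toNat (by omega) x ?_).trans_eq (by ring)
  rw [hk]
  exact hEmono j (le_of_max_le_left hn) hm

end

theorem isBaireOne_of_preimage_open_isFSigma {X : Type*} [TopologicalSpace X] [NormalSpace X]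
    (f : X → ℝ) (hf : ∀ G : Set ℝ, IsOpen G → IsFSigma (f ⁻¹' G)) :
    IsBaireOne f :=
  isBaireOne_of_forall_eventually_abs_sub_le fun _ hε =>
    exists_seq_continuous_eventually_abs_sub_le (fun _ _ => hf _ isOpen_Ioo) hε
end

section
/- Let X be a normal topological space and f : X → ℝ a Baire one function such that f(x) ≠ 0 for every x ∈ X. Then the function x ↦ 1/f(x) is also a Baire one function on X. (Consequently, f is a unit in the ring B₁(X) if and only if its zero set is empty.) -/
open Filter Topology

theorem Filter.Tendsto.div_sq_add {α : Type*} {l : Filter α} {u ε : α → ℝ} {a : ℝ}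
    (hu : Tendsto u l (𝓝 a)) (hε : Tendsto ε l (𝓝 0)) (ha : a ≠ 0) :
    Tendsto (fun i => u i / (u i ^ 2 + ε i)) l (𝓝 (1 / a)) := by
  have hden : Tendsto (fun i => u i ^ 2 + ε i) l (𝓝 (a ^ 2)) := by
    simpa using (hu.pow 2).add hε
  have hlim : a / a ^ 2 = 1 / a := by
    rw [sq, div_mul_eq_div_div_swap, div_self ha]
  rw [← hlim]
  exact hu.div hden (pow_ne_zero 2 ha)

theorem Continuous.div_sq_add_const {X : Type*} [TopologicalSpace X] {g : X → ℝ}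
    (hg : Continuous g) {c : ℝ} (hc : 0 < c) :
    Continuous fun x => g x / (g x ^ 2 + c) :=
  hg.div ((hg.pow 2).add continuous_const) fun x => by positivity

theorem baireOne_inv_of_ne_zero_general {X : Type*} [TopologicalSpace X]
    (f : X → ℝ) (hf : IsBaireOne f) (hz : ∀ x, f x ≠ 0) :
    IsBaireOne (fun x => 1 / f x) := by
  obtain ⟨F, hF_cont, hF_lim⟩ := hf
  refine ⟨fun n x => F n x / (F n x ^ 2 + 1 / (n + 1)), fun n => ?_, fun x => ?_⟩
  · exact (hF_cont n).div_sq_add_const Nat.one_div_pos_of_nat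
  · exact (hF_lim x).div_sq_add tendsto_one_div_add_atTop_nhds_zero_nat (hz x)

theorem baireOne_inv_of_ne_zero {X : Type*} [TopologicalSpace X] [NormalSpace X]
    (f : X → ℝ) (hf : IsBaireOne f) (hz : ∀ x, f x ≠ 0) :
    IsBaireOne (fun x => 1 / f x) :=
  baireOne_inv_of_ne_zero_general f hf hz
end

section
/- Let X be a topological space on which every Baire one function f : X → ℝ is bounded. Then for every continuous function f : X → ℝ and every real number r, r is not a limit point of the range f(X); that is, r does not lie in the closure of f(X) \ {r}. -/
open Filter Topology

lemma tendsto_div_sq_add_inv_succ (t : ℝ) :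
    Tendsto (fun n : ℕ => t / (t ^ 2 + ((n : ℝ) + 1)⁻¹)) atTop (𝓝 t⁻¹) := by
  rcases eq_or_ne t 0 with rfl | ht
  · simp
  have hε : Tendsto (fun n : ℕ => ((n : ℝ) + 1)⁻¹) atTop (𝓝 0) := by
    simpa only [one_div] using tendsto_one_div_add_atTop_nhds_zero_nat (𝕜 := ℝ)
  have hlim : Tendsto (fun n : ℕ => t / (t ^ 2 + ((n : ℝ) + 1)⁻¹)) atTop (𝓝 (t / (t ^ 2 + 0))) :=
    tendsto_const_nhds.div (tendsto_const_nhds.add hε) (by simpa using pow_ne_zero 2 ht)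
  have hval : t / (t ^ 2 + 0) = t⁻¹ := by rw [add_zero, sq, div_mul_cancel_left₀ ht]
  rwa [hval] at hlim

lemma Continuous.isBaireOne_inv {X : Type*} [TopologicalSpace X] {f : X → ℝ}
    (hf : Continuous f) : IsBaireOne fun x => (f x)⁻¹ := by
  refine ⟨fun n x => f x / (f x ^ 2 + ((n : ℝ) + 1)⁻¹), fun n => ?_,
    fun x => tendsto_div_sq_add_inv_succ (f x)⟩
  exact hf.div (by fun_prop) fun x => by positivity

lemma exists_lt_abs_inv_sub_of_mem_closure {S : Set ℝ} {r : ℝ} (hr : r ∈ closure (S \ {r}))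
    (M : ℝ) : ∃ s ∈ S, M < |s - r|⁻¹ := by
  have hbound : 0 < max M 0 + 1 := by positivity
  obtain ⟨s, ⟨hsS, hsr⟩, hdist⟩ := Metric.mem_closure_iff.mp hr _ (inv_pos.mpr hbound)
  have hpos : 0 < |s - r| := abs_pos.mpr (sub_ne_zero.mpr hsr)
  have hsmall : |s - r| < (max M 0 + 1)⁻¹ := by rwa [Real.dist_eq, abs_sub_comm] at hdist
  refine ⟨s, hsS, ?_⟩
  calc M < max M 0 + 1 := by linarith [le_max_left M 0]
    _ < |s - r|⁻¹ := (lt_inv_comm₀ hbound hpos).mpr hsmall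

theorem no_limit_point_of_range_of_baireOne_bounded {X : Type*} [TopologicalSpace X]
    (hbd : ∀ f : X → ℝ, IsBaireOne f → ∃ M : ℝ, ∀ x, |f x| ≤ M) :
    ∀ f : X → ℝ, Continuous f → ∀ r : ℝ, r ∉ closure ((Set.range f) \ {r}) := by
  intro f hf r hr
  obtain ⟨M, hM⟩ := hbd _ (hf.sub continuous_const).isBaireOne_inv
  obtain ⟨_, ⟨x, rfl⟩, hx⟩ := exists_lt_abs_inv_sub_of_mem_closure hr M
  exact (hM x).not_gt (by rwa [abs_inv])
end

section
/- Let X be a completely Hausdorff topological space, i.e., for any two distinct points x, y ∈ X there exists a continuous function f : X → ℝ with f(x) = 0 and f(y) = 1. If every Baire one function g : X → ℝ is bounded, then X is totally disconnected (every connected subset of X has at most one point). -/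
/-!
If a connected set contained two points `x ≠ y`, pick a continuous `f` with `f x = 0`, `f y = 1`.
Then `f` maps the set onto a superset of `[0, 1]`, so `z ↦ (f z - 1/2)⁻¹` is unbounded. But it is
Baire one: inversion on `ℝ` (with `0⁻¹ = 0`) is the pointwise limit of the continuous functions
`t ↦ t / (t ^ 2 + 1 / (n + 1))`, and Baire one functions are stable under precomposition with
continuous maps.
-/

open Filter Topology Set

theorem IsBaireOne.comp_continuous {X Y Z : Type*} [TopologicalSpace X] [TopologicalSpace Y]
    [TopologicalSpace Z] {g : Y → Z} {f : X → Y} (hg : IsBaireOne g) (hf : Continuous f) :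
    IsBaireOne (g ∘ f) :=
  let ⟨G, hG, hGg⟩ := hg
  ⟨fun n => G n ∘ f, fun n => (hG n).comp hf, fun x => hGg (f x)⟩

theorem isBaireOne_inv : IsBaireOne fun t : ℝ => t⁻¹ := by
  refine ⟨fun n t => t / (t ^ 2 + 1 / (n + 1)), fun n => ?_, fun t => ?_⟩
  · exact continuous_id.div ((continuous_pow 2).add continuous_const)
      fun t => by positivity
  · rcases eq_or_ne t 0 with rfl | ht
    · simp
    · have hden : Tendsto (fun n : ℕ => t ^ 2 + 1 / ((n : ℝ) + 1)) atTop (𝓝 (t ^ 2)) := by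
        simpa using tendsto_one_div_add_atTop_nhds_zero_nat.const_add (t ^ 2)
      have hlim : Tendsto (fun n : ℕ => t / (t ^ 2 + 1 / ((n : ℝ) + 1))) atTop (𝓝 (t / t ^ 2)) :=
        tendsto_const_nhds.div hden (pow_ne_zero 2 ht)
      rwa [sq, div_mul_cancel_left₀ ht, ← sq] at hlim

theorem exists_mem_Icc_lt_abs_inv_sub {a b c : ℝ} (hc : c ∈ Ioo a b) (M : ℝ) :
    ∃ t ∈ Icc a b, M < |(t - c)⁻¹| := by
  have hblowup : Tendsto (fun t => |(t - c)⁻¹|) (𝓝[≠] c) atTop := by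
    simpa only [abs_inv, Pi.inv_def, Real.norm_eq_abs] using
      (tendsto_norm_sub_self_nhdsNE c).inv_tendsto_nhdsGT_zero
  have hIcc : Icc a b ∈ 𝓝[≠] c := mem_nhdsWithin_of_mem_nhds (Icc_mem_nhds hc.1 hc.2)
  exact (Filter.eventually_mem_set.mpr hIcc |>.and (hblowup.eventually_gt_atTop M)).exists

theorem totallyDisconnected_of_baireOne_bounded {X : Type*} [TopologicalSpace X]
    (hch : ∀ x y : X, x ≠ y → ∃ f : X → ℝ, Continuous f ∧ f x = 0 ∧ f y = 1)
    (hbd : ∀ g : X → ℝ, IsBaireOne g → ∃ M : ℝ, ∀ x, |g x| ≤ M) :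
    ∀ S : Set X, IsConnected S → S.Subsingleton := by
  intro S hS x hx y hy
  by_contra hxy
  obtain ⟨f, hf, hfx, hfy⟩ := hch x y hxy
  have hIcc : Icc 0 1 ⊆ f '' S :=
    (hS.isPreconnected.image f hf.continuousOn).Icc_subset ⟨x, hx, hfx⟩ ⟨y, hy, hfy⟩
  have hbaire : IsBaireOne fun z => (f z - 1 / 2)⁻¹ :=
    isBaireOne_inv.comp_continuous (hf.sub continuous_const)
  obtain ⟨M, hM⟩ := hbd _ hbaire
  obtain ⟨t, ht, hMt⟩ := exists_mem_Icc_lt_abs_inv_sub (show (1 / 2 : ℝ) ∈ Ioo 0 1 by norm_num) M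
  obtain ⟨z, -, rfl⟩ := hIcc ht
  exact (hM z).not_gt hMt
end

section
/- Let X be any topological space, and let (f_k)_{k≥1} be a sequence of Baire one functions f_k : X → ℝ. Suppose there are positive reals M_k with ∑_{k=1}^∞ M_k < ∞ and |f_k(x)| ≤ M_k for all k and all x ∈ X. Then the function f(x) = ∑_{k=1}^∞ f_k(x) is a Baire one function on X. -/
/-!
Approximate each `f k` by continuous functions clamped to `[-M k, M k]`; the clamping keeps the
limit because `f k` already takes values there. The diagonal partial sums
`∑_{k < n} g_{k,n}` are continuous, and by Tannery's theorem (dominated convergence for series,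
with dominating sequence `M`) they converge pointwise to `∑' k, f k`.
-/

open Filter Topology Finset

lemma IsBaireOne.exists_approx_mem_Icc {X Y : Type*} [TopologicalSpace X] [TopologicalSpace Y]
    [LinearOrder Y] [OrderClosedTopology Y] {f : X → Y} (hf : IsBaireOne f) {a b : Y}
    (hab : ∀ x, f x ∈ Set.Icc a b) :
    ∃ F : ℕ → X → Y, (∀ n, Continuous (F n)) ∧ (∀ n x, F n x ∈ Set.Icc a b) ∧
      ∀ x, Tendsto (fun n => F n x) atTop (𝓝 (f x)) := by
  obtain ⟨F, hFc, hFt⟩ := hf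
  refine ⟨fun n x => max a (min b (F n x)), fun n => continuous_const.max
    (continuous_const.min (hFc n)), fun n x => ⟨le_max_left _ _, ?_⟩, fun x => ?_⟩
  · exact max_le ((hab x).1.trans (hab x).2) (min_le_left _ _)
  · have hclamp : max a (min b (f x)) = f x := by
      rw [min_eq_right (hab x).2, max_eq_right (hab x).1]
    rw [← hclamp]
    exact tendsto_const_nhds.max (tendsto_const_nhds.min (hFt x))

lemma IsBaireOne.exists_approx_abs_le {X : Type*} [TopologicalSpace X] {f : X → ℝ}
    (hf : IsBaireOne f) {C : ℝ} (hC : ∀ x, |f x| ≤ C) :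
    ∃ F : ℕ → X → ℝ, (∀ n, Continuous (F n)) ∧ (∀ n x, |F n x| ≤ C) ∧
      ∀ x, Tendsto (fun n => F n x) atTop (𝓝 (f x)) := by
  simp only [abs_le] at hC ⊢
  exact hf.exists_approx_mem_Icc hC

lemma tendsto_sum_range_of_dominated_convergence {G : Type*} [NormedAddCommGroup G]
    [CompleteSpace G] {u : ℕ → ℕ → G} {v : ℕ → G} {bound : ℕ → ℝ} (h_sum : Summable bound)
    (h_lim : ∀ k, Tendsto (fun n => u n k) atTop (𝓝 (v k)))
    (h_bound : ∀ n k, ‖u n k‖ ≤ bound k) :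
    Tendsto (fun n => ∑ k ∈ range n, u n k) atTop (𝓝 (∑' k, v k)) := by
  have h_trunc : ∀ n, ∑' k, (if k < n then u n k else 0) = ∑ k ∈ range n, u n k := fun n => by
    rw [tsum_eq_sum (s := range n) fun k hk => if_neg (mem_range.not.mp hk)]
    exact sum_congr rfl fun k hk => if_pos (mem_range.mp hk)
  refine (tendsto_tsum_of_dominated_convergence h_sum (fun k => ?_) ?_).congr h_trunc
  · refine (h_lim k).congr' ?_
    filter_upwards [eventually_gt_atTop k] with n hn
    exact (if_pos hn).symm
  · refine Eventually.of_forall fun n k => ?_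
    split_ifs
    · exact h_bound n k
    · simpa using (norm_nonneg _).trans (h_bound n k)

theorem baireOne_tsum_general {X : Type*} [TopologicalSpace X]
    (f : ℕ → X → ℝ) (hf : ∀ k, IsBaireOne (f k))
    (M : ℕ → ℝ) (hMsum : Summable M)
    (hbd : ∀ k x, |f k x| ≤ M k) :
    IsBaireOne (fun x => ∑' k, f k x) := by
  choose g hgc hgM hgt using fun k => (hf k).exists_approx_abs_le (hbd k)
  refine ⟨fun n x => ∑ k ∈ range n, g k n x,
    fun n => continuous_finsetSum _ fun k _ => hgc k n, fun x => ?_⟩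
  exact tendsto_sum_range_of_dominated_convergence (u := fun n k => g k n x) hMsum
    (fun k => hgt k x) fun n k => (Real.norm_eq_abs _).trans_le (hgM k n x)

theorem baireOne_tsum {X : Type*} [TopologicalSpace X]
    (f : ℕ → X → ℝ) (hf : ∀ k, IsBaireOne (f k))
    (M : ℕ → ℝ) (hMpos : ∀ k, 0 < M k) (hMsum : Summable M)
    (hbd : ∀ k x, |f k x| ≤ M k) :
    IsBaireOne (fun x => ∑' k, f k x) :=
  baireOne_tsum_general f hf M hMsum hbd
end

section
/- Let X be any topological space and (f_n)_{n≥1} a sequence of Baire one functions f_n : X → ℝ. Then there exists a Baire one function g : X → ℝ such that Z(g) = ⋂_{n=1}^∞ Z(f_n); that is, the collection of zero sets of Baire one functions on X is closed under countable intersection. -/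
/-! Truncate each `|f n|` at `1` and form `g = ∑ 2⁻ⁿ min (|f n|) 1`: a sum of nonnegative terms,
vanishing exactly where every `f n` does. If `F n k → f n` with `F n k` continuous, then
`x ↦ ∑ 2⁻ⁿ min (|F n k x|) 1` is continuous by the Weierstrass M-test and tends to `g` pointwise
as `k → ∞` by Tannery's theorem (dominated convergence for series), so `g` is Baire one. -/

open Filter

theorem IsBaireOne.tsum_comp {ι X Y E : Type*} [TopologicalSpace X] [TopologicalSpace Y]
    [NormedAddCommGroup E] [CompleteSpace E] {f : ι → X → Y} (hf : ∀ i, IsBaireOne (f i))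
    {φ : ι → Y → E} (hφ : ∀ i, Continuous (φ i)) {u : ι → ℝ} (hu : Summable u)
    (hφu : ∀ i y, ‖φ i y‖ ≤ u i) :
    IsBaireOne fun x => ∑' i, φ i (f i x) := by
  choose F hFc hF using hf
  refine ⟨fun k x => ∑' i, φ i (F i k x),
    fun k => continuous_tsum (fun i => (hφ i).comp (hFc i k)) hu fun i x => hφu i _,
    fun x => ?_⟩
  exact tendsto_tsum_of_dominated_convergence hu (fun i => ((hφ i).tendsto _).comp (hF i x))
    (Eventually.of_forall fun k i => hφu i _)

lemma norm_mul_min_abs_one_le {c : ℝ} (hc : 0 ≤ c) (t : ℝ) : ‖c * min |t| 1‖ ≤ c := by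
  rw [Real.norm_eq_abs, abs_of_nonneg (by positivity)]
  exact mul_le_of_le_one_right hc (min_le_right _ _)

lemma tsum_mul_min_abs_one_eq_zero_iff {ι : Type*} {u : ι → ℝ} (hu : Summable u)
    (hu_pos : ∀ i, 0 < u i) (a : ι → ℝ) :
    ∑' i, u i * min |a i| 1 = 0 ↔ ∀ i, a i = 0 := by
  have hnonneg : ∀ i, 0 ≤ u i * min |a i| 1 := fun i => by have := hu_pos i; positivity
  have hsum : Summable fun i => u i * min |a i| 1 :=
    hu.of_nonneg_of_le hnonneg fun i => (le_abs_self _).trans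
      (norm_mul_min_abs_one_le (hu_pos i).le (a i))
  rw [← hsum.hasSum_iff, hasSum_zero_iff_of_nonneg hnonneg, funext_iff]
  refine forall_congr' fun i => ?_
  simp +contextual [(hu_pos i).ne', min_eq_iff]

theorem zeroSets_closed_under_countable_inter {X : Type*} [TopologicalSpace X]
    (f : ℕ → X → ℝ) (hf : ∀ n, IsBaireOne (f n)) :
    ∃ g : X → ℝ, IsBaireOne g ∧ {x : X | g x = 0} = ⋂ n, {x : X | f n x = 0} := by
  have hu : Summable fun n : ℕ => (1 / 2 : ℝ) ^ n := summable_geometric_two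
  refine ⟨fun x => ∑' n, (1 / 2 : ℝ) ^ n * min |f n x| 1,
    IsBaireOne.tsum_comp hf (φ := fun n t => (1 / 2 : ℝ) ^ n * min |t| 1) (fun n => by fun_prop)
      hu fun n => norm_mul_min_abs_one_le (by positivity), ?_⟩
  ext x
  simpa using tsum_mul_min_abs_one_eq_zero_iff hu (fun n => by positivity) (f · x)
end

section
/- Let X be any topological space and A, B ⊆ X. Then A and B are completely separated in X by B₁(X) if and only if there exist Baire one functions f, g : X → ℝ such that A ⊆ Z(f), B ⊆ Z(g), and Z(f) ∩ Z(g) = ∅. -/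
/-- Two subsets `A`, `B` of `X` are *completely separated by `B₁(X)`* if there is a
Baire one function `h : X → ℝ` with `0 ≤ h ≤ 1`, `h = 0` on `A` and `h = 1` on `B`. -/
def CompletelySeparatedB1 {X : Type*} [TopologicalSpace X] (A B : Set X) : Prop :=
  ∃ h : X → ℝ, IsBaireOne h ∧ (∀ x, 0 ≤ h x ∧ h x ≤ 1) ∧
    (∀ x ∈ A, h x = 0) ∧ (∀ x ∈ B, h x = 1)


/-!
If `h` separates `A` and `B`, then `h` and `h - 1` have disjoint zero sets containing `A` and `B`.
Conversely, if `f` and `g` are Baire one with disjoint zero sets, then `|f| + |g|` is positive and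
`|f| / (|f| + |g|)` separates `Z(f)` from `Z(g)`; it is Baire one because a quotient of Baire one
functions by a positive one is approximated by `Fₙ / max Gₙ (1 / (n + 1))`.
-/

open Filter Topology

section

variable {X : Type*} [TopologicalSpace X]

theorem Continuous.comp_isBaireOne {Y Z : Type*} [TopologicalSpace Y] [TopologicalSpace Z]
    {φ : Y → Z} {f : X → Y} (hφ : Continuous φ) (hf : IsBaireOne f) : IsBaireOne (φ ∘ f) := by
  obtain ⟨F, hFc, hF⟩ := hf
  exact ⟨fun n => φ ∘ F n, fun n => hφ.comp (hFc n), fun x => (hφ.tendsto (f x)).comp (hF x)⟩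

theorem IsBaireOne.add {Y : Type*} [TopologicalSpace Y] [Add Y] [ContinuousAdd Y]
    {f g : X → Y} (hf : IsBaireOne f) (hg : IsBaireOne g) : IsBaireOne (f + g) := by
  obtain ⟨F, hFc, hF⟩ := hf
  obtain ⟨G, hGc, hG⟩ := hg
  exact ⟨fun n => F n + G n, fun n => (hFc n).add (hGc n), fun x => (hF x).add (hG x)⟩

theorem IsBaireOne.div_of_pos {f g : X → ℝ} (hf : IsBaireOne f) (hg : IsBaireOne g)
    (hpos : ∀ x, 0 < g x) : IsBaireOne (f / g) := by
  obtain ⟨F, hFc, hF⟩ := hf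
  obtain ⟨G, hGc, hG⟩ := hg
  have hden_pos (n : ℕ) (x : X) : 0 < max (G n x) (1 / (n + 1)) :=
    lt_max_of_lt_right (by positivity)
  refine ⟨fun n x => F n x / max (G n x) (1 / (n + 1)),
    fun n => (hFc n).div ((hGc n).max continuous_const) fun x => (hden_pos n x).ne', fun x => ?_⟩
  have hden : Tendsto (fun n : ℕ => max (G n x) (1 / (n + 1))) atTop (𝓝 (g x)) := by
    simpa only [max_eq_left (hpos x).le] using
      (hG x).max tendsto_one_div_add_atTop_nhds_zero_nat
  exact (hF x).div hden (hpos x).ne'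

theorem CompletelySeparatedB1.mono {A B A' B' : Set X} (hAB : CompletelySeparatedB1 A B)
    (hA : A' ⊆ A) (hB : B' ⊆ B) : CompletelySeparatedB1 A' B' := by
  obtain ⟨h, hh, hbounds, hZA, hZB⟩ := hAB
  exact ⟨h, hh, hbounds, fun x hx => hZA x (hA hx), fun x hx => hZB x (hB hx)⟩

theorem CompletelySeparatedB1.exists_disjoint_zeroSets {A B : Set X}
    (hAB : CompletelySeparatedB1 A B) :
    ∃ f g : X → ℝ, IsBaireOne f ∧ IsBaireOne g ∧
      A ⊆ {x | f x = 0} ∧ B ⊆ {x | g x = 0} ∧ {x | f x = 0} ∩ {x | g x = 0} = ∅ := by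
  obtain ⟨h, hh, -, hA, hB⟩ := hAB
  refine ⟨h, (· - 1) ∘ h, hh, (continuous_sub_right 1).comp_isBaireOne hh, hA,
    fun x hx => by simp [hB x hx], ?_⟩
  ext x
  simp only [Set.mem_inter_iff, Set.mem_ofPred_eq, Function.comp_apply, Set.mem_empty_iff_false,
    iff_false, not_and]
  intro h0
  norm_num [h0]

theorem completelySeparatedB1_of_disjoint_zeroSets {f g : X → ℝ} (hf : IsBaireOne f)
    (hg : IsBaireOne g) (hdisj : {x | f x = 0} ∩ {x | g x = 0} = ∅) :
    CompletelySeparatedB1 {x | f x = 0} {x | g x = 0} := by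
  have hne (x : X) : f x = 0 → g x ≠ 0 := fun hf0 hg0 => (hdisj.subset ⟨hf0, hg0⟩ : x ∈ ∅)
  have hpos (x : X) : 0 < |f x| + |g x| := by
    by_cases hf0 : f x = 0
    · simpa [hf0] using hne x hf0
    · exact add_pos_of_pos_of_nonneg (abs_pos.mpr hf0) (abs_nonneg _)
  have habs (u : X → ℝ) (hu : IsBaireOne u) : IsBaireOne fun x => |u x| :=
    continuous_abs.comp_isBaireOne hu
  refine ⟨fun x => |f x| / (|f x| + |g x|),
    (habs f hf).div_of_pos ((habs f hf).add (habs g hg)) hpos,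
    fun x => ⟨by positivity, (div_le_one (hpos x)).mpr (le_add_of_nonneg_right (abs_nonneg _))⟩,
    fun x (hf0 : f x = 0) => by simp [hf0], fun x (hg0 : g x = 0) => ?_⟩
  have hf0 : f x ≠ 0 := fun hf0 => hne x hf0 hg0
  simp [hg0, hf0]

end

theorem completelySeparatedB1_iff_disjoint_zeroSets {X : Type*} [TopologicalSpace X]
    (A B : Set X) :
    CompletelySeparatedB1 A B ↔
      ∃ f g : X → ℝ, IsBaireOne f ∧ IsBaireOne g ∧
        A ⊆ {x : X | f x = 0} ∧ B ⊆ {x : X | g x = 0} ∧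
        {x : X | f x = 0} ∩ {x : X | g x = 0} = ∅ := by
  refine ⟨CompletelySeparatedB1.exists_disjoint_zeroSets, ?_⟩
  rintro ⟨f, g, hf, hg, hA, hB, hdisj⟩
  exact (completelySeparatedB1_of_disjoint_zeroSets hf hg hdisj).mono hA hB
end
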